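/- For every upper expectation tree Q̄, every situation s, and every pointwise non-increasing sequence (f_n) of finitary gambles with pointwise limit f = inf_n f_n, one has lim_{n→∞} Ē_Q̄(f_n|s) = Ē_Q̄(f|s). -/

import Mathlib

open Filter MeasureTheory Topology
open scoped ENNReal

namespace UEPaper

variable {X : Type} [Fintype X] [Nonempty X] [DecidableEq X]

/-- The set of paths: infinite sequences of states (`ω i` is the `(i+1)`-th state). -/
abbrev Path (X : Type) := ℕ → X

/-- The prefix `ω^k` of length `k` of a path, as a list (a situation). -/
def prefixList (ω : Path X) (k : ℕ) : List X := (List.range k).map ω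

/-- The cylinder event `Γ(s)` of a situation `s`. -/
def cyl (s : List X) : Set (Path X) := {ω | prefixList ω s.length = s}

/-- `f` is `n`-measurable: it depends only on the first `n` states. -/
def NMeas (n : ℕ) (f : Path X → EReal) : Prop :=
  ∀ ω ω' : Path X, prefixList ω n = prefixList ω' n → f ω = f ω'

/-- A gamble: a bounded real-valued global variable. -/
def IsGamble (f : Path X → EReal) : Prop :=
  ∃ B : ℝ, ∀ ω, -(B : EReal) ≤ f ω ∧ f ω ≤ (B : EReal)

/-- A finitary gamble: an `n`-measurable gamble for some `n`. -/
def IsFinGamble (f : Path X → EReal) : Prop :=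
  (∃ n, NMeas n f) ∧ IsGamble f

/-- An upper expectation tree: a coherent upper expectation at each situation. -/
structure UpperExpTree (X : Type) [Fintype X] [Nonempty X] where
  Q : List X → (X → ℝ) → ℝ
  le_sup : ∀ (s : List X) (f : X → ℝ), Q s f ≤ ⨆ x, f x
  subadd : ∀ (s : List X) (f g : X → ℝ), Q s (f + g) ≤ Q s f + Q s g
  pos_homog : ∀ (s : List X) (l : ℝ) (f : X → ℝ), 0 ≤ l → Q s (l • f) = l * Q s f

/-- A (real-valued) supermartingale for the upper expectation tree `Q`. -/
def IsSupermart (Q : UpperExpTree X) (M : List X → ℝ) : Prop :=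
  ∀ s : List X, Q.Q s (fun x => M (s ++ [x])) ≤ M s

/-- The game-theoretic upper expectation of a real-valued variable (used on gambles):
the infimum of `M s` over bounded-below supermartingales `M` with
`liminf_k M(ω^k) ≥ f(ω)` on `Γ(s)`. -/
noncomputable def gtG (Q : UpperExpTree X) (f : Path X → ℝ) (s : List X) : EReal :=
  sInf {a : EReal | ∃ M : List X → ℝ, IsSupermart Q M ∧ (∃ B : ℝ, ∀ t, B ≤ M t) ∧
    (∀ ω ∈ cyl s,
      (f ω : EReal) ≤ Filter.liminf (fun k => ((M (prefixList ω k) : ℝ) : EReal)) atTop) ∧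
    a = ((M s : ℝ) : EReal)}

/-- Extension to bounded-below variables, by continuity w.r.t. upper cuts:
`Ē(f|s) = lim_{c → +∞} Ē(min(f,c)|s)` (the limit of this nondecreasing net is a supremum). -/
noncomputable def gtBB (Q : UpperExpTree X) (f : Path X → EReal) (s : List X) : EReal :=
  ⨆ c : ℝ, gtG Q (fun ω => (f ω ⊓ (c : EReal)).toReal) s

/-- The game-theoretic global upper expectation `Ē_Q̄`, extended to all extended
real variables by continuity w.r.t. lower cuts:
`Ē(f|s) = lim_{c → −∞} Ē(max(f,c)|s)` (the limit of this nonincreasing net is an infimum). -/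
noncomputable def gtUE (Q : UpperExpTree X) (f : Path X → EReal) (s : List X) : EReal :=
  ⨅ c : ℝ, gtBB Q (fun ω => f ω ⊔ (c : EReal)) s

/-- A precise probability tree: a probability mass function at each situation. -/
structure PreciseTree (X : Type) [Fintype X] where
  p : List X → X → ℝ
  nonneg : ∀ (s : List X) (x : X), 0 ≤ p s x
  sum_one : ∀ s : List X, ∑ x, p s x = 1

/-- An imprecise probability tree: a nonempty closed convex set of probability mass
functions at each situation. -/
structure ImpreciseTree (X : Type) [Fintype X] where
  sets : List X → Set (X → ℝ)
  nonempty' : ∀ s : List X, (sets s).Nonempty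
  closed' : ∀ s : List X, IsClosed (sets s)
  convex' : ∀ s : List X, Convex ℝ (sets s)
  prob' : ∀ s : List X, ∀ q ∈ sets s, (∀ x, 0 ≤ q x) ∧ ∑ x, q x = 1

/-- `p ∼ 𝒫`: the precise tree `p` is compatible with the imprecise tree `P`. -/
def Compatible (p : PreciseTree X) (P : ImpreciseTree X) : Prop :=
  ∀ s : List X, p.p s ∈ P.sets s

/-- The probability `P_p(Γ(z)|s)` of the cylinder of `z` conditional on situation `s`. -/
noncomputable def cylProb (p : List X → X → ℝ) (s z : List X) : ℝ :=
  if s.length < z.length ∧ z.take s.length = s then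
    ∏ i ∈ Finset.Ico s.length z.length, p (z.take i) (z.getD i (Classical.arbitrary X))
  else if z.length ≤ s.length ∧ s.take z.length = z then 1 else 0

/-- The σ-algebra `ℱ` on paths generated by the cylinder events. -/
instance cylSigma : MeasurableSpace (Path X) :=
  MeasurableSpace.generateFrom {A | ∃ s : List X, A = cyl s}

/-- `μ` is the probability measure `P_p(·|s)` on `ℱ` determined by the tree `p`. -/
def IsTreeMeasure (p : PreciseTree X) (s : List X) (μ : Measure (Path X)) : Prop :=
  IsProbabilityMeasure μ ∧ ∀ z : List X, μ (cyl z) = ENNReal.ofReal (cylProb p.p s z)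

/-- Positive part of an extended real, in `ℝ≥0∞`. -/
noncomputable def posPart (x : EReal) : ℝ≥0∞ := if x = ⊤ then ⊤ else ENNReal.ofReal x.toReal

/-- The Lebesgue integral `∫ g dμ = ∫ g⁺ dμ − ∫ g⁻ dμ` of an extended-real variable
(well-defined, with value in `(-∞, +∞]`, for bounded-below measurable `g`). -/
noncomputable def integralE (μ : Measure (Path X)) (g : Path X → EReal) : EReal :=
  ((∫⁻ ω, posPart (g ω) ∂μ : ℝ≥0∞) : EReal) - ((∫⁻ ω, posPart (-(g ω)) ∂μ : ℝ≥0∞) : EReal)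

/-- The upper integral `Ē_p(f|s)`: infimum of integrals of bounded-below
`ℱ`-measurable variables dominating `f`. -/
noncomputable def upperInt (μ : Measure (Path X)) (f : Path X → EReal) : EReal :=
  sInf {a : EReal | ∃ g : Path X → EReal, Measurable g ∧ (∃ B : ℝ, ∀ ω, (B : EReal) ≤ g ω) ∧
    (∀ ω, f ω ≤ g ω) ∧ a = integralE μ g}

/-- The measure-theoretic global upper expectation `Ē_𝒫(f|s)`, given the assignment
`Pm` of the measures `P_p(·|s)` to precise trees: the upper envelope of the upper
integrals over all compatible precise trees. -/
noncomputable def muUE (Pm : PreciseTree X → List X → Measure (Path X))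
    (P : ImpreciseTree X) (f : Path X → EReal) (s : List X) : EReal :=
  ⨆ (p : PreciseTree X) (_ : Compatible p P), upperInt (Pm p s) f

/-- The trees `P` and `Q` agree: each `Q̄_s` is the upper envelope of the expectations
corresponding to the credal set `𝒫_s`. -/
def Agree (P : ImpreciseTree X) (Q : UpperExpTree X) : Prop :=
  ∀ (s : List X) (f : X → ℝ),
    Q.Q s f = sSup {r : ℝ | ∃ q ∈ P.sets s, r = ∑ x, f x * q x}

/-- Axioms P1–P5 for a global upper expectation `E` w.r.t. the tree `Q`. -/
structure Axioms (Q : UpperExpTree X) (E : (Path X → EReal) → List X → EReal) : Prop where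
  p1 : ∀ (f : X → ℝ) (s : List X),
    E (fun ω => ((f (ω s.length) : ℝ) : EReal)) s = ((Q.Q s f : ℝ) : EReal)
  p2 : ∀ f : Path X → EReal, IsFinGamble f → ∀ s : List X, E f s = E ((cyl s).indicator f) s
  p3 : ∀ f : Path X → EReal, IsFinGamble f → ∀ s : List X,
    E f s ≤ E (fun ω => E f (prefixList ω (s.length + 1))) s
  p4 : ∀ f g : Path X → EReal, (∀ ω, f ω ≤ g ω) → ∀ s : List X, E f s ≤ E g s
  p5 : ∀ (s : List X) (fn : ℕ → Path X → EReal) (f : Path X → EReal),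
    (∀ n, IsFinGamble (fn n)) → (∃ B : ℝ, ∀ n ω, (B : EReal) ≤ fn n ω) →
    (∀ ω, Tendsto (fun n => fn n ω) atTop (nhds (f ω))) →
    E f s ≤ limsup (fun n => E (fn n) s) atTop

/-- Upper semicontinuity of an extended-real variable on the path space. -/
def USC [TopologicalSpace X] [DiscreteTopology X] (f : Path X → EReal) : Prop :=
  ∀ a : ℝ, IsOpen {ω : Path X | f ω < (a : EReal)}

/-- An `Ω`-capacity (Dellacherie): a monotone `[0,∞]`-valued functional on nonnegative
variables, continuous along nondecreasing sequences, and continuous along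
nonincreasing sequences of nonnegative real-valued upper semicontinuous functions. -/
def IsCapacity [TopologicalSpace X] [DiscreteTopology X]
    (F : (Path X → EReal) → EReal) : Prop :=
  (∀ f : Path X → EReal, (∀ ω, 0 ≤ f ω) → 0 ≤ F f) ∧
  (∀ f g : Path X → EReal, (∀ ω, 0 ≤ f ω) → (∀ ω, 0 ≤ g ω) → (∀ ω, f ω ≤ g ω) → F f ≤ F g) ∧
  (∀ fn : ℕ → Path X → EReal, (∀ n ω, 0 ≤ fn n ω) → Monotone fn →
    Tendsto (fun n => F (fn n)) atTop (nhds (F (fun ω => ⨆ n, fn n ω)))) ∧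
  (∀ fn : ℕ → Path X → EReal, (∀ n ω, 0 ≤ fn n ω ∧ fn n ω < ⊤) → (∀ n, USC (fn n)) →
    Antitone fn →
    Tendsto (fun n => F (fn n)) atTop (nhds (F (fun ω => ⨅ n, fn n ω))))

open Classical in
/-- The metric `δ(ω,ω') = 2^{-n}`, `n` the first (1-based) index where `ω` and `ω'` differ. -/
noncomputable def delta (ω ω' : Path X) : ℝ :=
  if h : ω = ω' then 0
  else (1 / 2 : ℝ) ^ (Nat.find (Function.ne_iff.mp h) + 1)

/-- The product topology on the path space (with `X` discrete). -/
def prodTop (X : Type) : TopologicalSpace (ℕ → X) :=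
  @Pi.topologicalSpace ℕ (fun _ => X) (fun _ => ⊥)

end UEPaper

/-! Monotonicity gives `Ē(f|s) ≤ Ē(f_n|s)`. For the converse, truncating below at `c` and above
at a bound of `f_0` turns all variables into real gambles. Let `M` be a bounded-below
supermartingale superhedging `f` on `Γ(s)` and `ε > 0`. Every path `ω ∈ Γ(s)` has a prefix `t`
such that some `f_k`, which is constant on `Γ(t)` once `t` is long enough, stays below `M(t) + ε`
there. By compactness of `Γ(s)` finitely many such cylinders cover it, so one `f_K` works on all
of them, and `M + ε` stopped on first entering one of these situations is a supermartingale
superhedging `f_K` from the value `M(s) + ε`. -/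

namespace UEPaper

section Paths

variable {X : Type}

lemma prefixList_length (ω : Path X) (k : ℕ) : (prefixList ω k).length = k := by
  simp [prefixList]

lemma prefixList_take (ω : Path X) {j m : ℕ} (h : j ≤ m) :
    (prefixList ω m).take j = prefixList ω j := by
  simp [prefixList, ← List.map_take, List.take_range, Nat.min_eq_left h]

lemma prefixList_prefix (ω : Path X) {j m : ℕ} (h : j ≤ m) :
    prefixList ω j <+: prefixList ω m :=
  prefixList_take ω h ▸ List.take_prefix j _

lemma mem_cyl_prefixList (ω : Path X) (m : ℕ) : ω ∈ cyl (prefixList ω m) := by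
  show prefixList ω _ = _
  rw [prefixList_length]

lemma mem_cyl_of_prefix {ω : Path X} {t : List X} {m : ℕ} (h : t <+: prefixList ω m) :
    ω ∈ cyl t := by
  have hlen : t.length ≤ m := prefixList_length ω m ▸ h.length_le
  show prefixList ω t.length = t
  rw [← prefixList_take ω hlen]
  exact (List.prefix_iff_eq_take.1 h).symm

lemma prefixList_eq_of_mem_cyl {ω ω' : Path X} {m j : ℕ} (h : ω' ∈ cyl (prefixList ω m))
    (hj : j ≤ m) : prefixList ω' j = prefixList ω j := by
  have h' : prefixList ω' (prefixList ω m).length = prefixList ω m := h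
  rw [prefixList_length] at h'
  rw [← prefixList_take ω' hj, ← prefixList_take ω hj, h']

lemma prefix_prefixList_of_mem_cyl {ω : Path X} {t : List X} (h : ω ∈ cyl t) {m : ℕ}
    (hm : t.length ≤ m) : t <+: prefixList ω m :=
  (h : prefixList ω t.length = t) ▸ prefixList_prefix ω hm

lemma exists_prefixList_const_lt_of_lt_liminf {M : List X → ℝ} {h : Path X → ℝ} {ω : Path X}
    {a : ℝ} (hh : ∃ m, ∀ ω ω' : Path X, prefixList ω m = prefixList ω' m → h ω = h ω')
    (ha : (a : EReal) < liminf (fun j => (M (prefixList ω j) : EReal)) atTop) (n : ℕ) :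
    ∃ m ≥ n, a < M (prefixList ω m) ∧ ∀ ω' ∈ cyl (prefixList ω m), h ω' = h ω := by
  obtain ⟨mh, hmh⟩ := hh
  obtain ⟨N, hN⟩ := eventually_atTop.1 (eventually_lt_of_lt_liminf ha)
  refine ⟨max (max N mh) n, by omega, EReal.coe_lt_coe_iff.1 (hN _ (by omega)),
    fun ω' hω' => hmh ω' ω (prefixList_eq_of_mem_cyl hω' (by omega))⟩

lemma isClopen_cyl [TopologicalSpace X] [DiscreteTopology X] (t : List X) :
    IsClopen (cyl t) := by
  have h : cyl t = ⋂ i : Fin t.length, (fun ω : Path X => ω i) ⁻¹' {t.get i} := by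
    ext ω
    simp [cyl, prefixList, List.ext_get_iff, Fin.forall_iff]
  rw [h]
  exact isClopen_iInter_of_finite fun i => (isClopen_discrete _).preimage (continuous_apply _)

lemma exists_finset_cover_cyl [Finite X] (s : List X) (P : List X → Prop)
    (h : ∀ ω ∈ cyl s, ∃ t, P t ∧ ω ∈ cyl t) :
    ∃ C : Finset (List X), (∀ t ∈ C, P t) ∧ cyl s ⊆ ⋃ t ∈ C, cyl t := by
  let _ : TopologicalSpace X := ⊥
  have _ : DiscreteTopology X := ⟨rfl⟩
  obtain ⟨C, hCP, hC, hcover⟩ := (isClopen_cyl s).isClosed.isCompact.elim_finite_subcover_image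
    (b := {t | P t}) (fun t _ => (isClopen_cyl t).isOpen)
    fun ω hω => by
      obtain ⟨t, ht, hωt⟩ := h ω hω
      exact Set.mem_biUnion ht hωt
  exact ⟨hC.toFinset, fun t ht => hCP (hC.mem_toFinset.1 ht), by simpa using hcover⟩

open Classical

-- `M (stopAt C u)` is the value at `u` of `M` stopped when the path first enters `C`.
noncomputable def stopAt (C : Set (List X)) (u : List X) : List X :=
  (u.inits.find? (· ∈ C)).getD u

lemma stopAt_prefix (C : Set (List X)) (u : List X) : stopAt C u <+: u := by
  unfold stopAt
  cases h : u.inits.find? (· ∈ C) with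
  | none => exact List.prefix_refl u
  | some t => exact (List.mem_inits _ _).1 (List.mem_of_find?_eq_some h)

lemma stopAt_mem {C : Set (List X)} {t u : List X} (ht : t ∈ C) (htu : t <+: u) :
    stopAt C u ∈ C := by
  unfold stopAt
  cases h : u.inits.find? (· ∈ C) with
  | none => simpa [ht] using List.find?_eq_none.1 h t ((List.mem_inits _ _).2 htu)
  | some t' => simpa using List.find?_some h

lemma stopAt_eq_self_of_notMem {C : Set (List X)} {u : List X} (h : stopAt C u ∉ C) :
    stopAt C u = u := by
  unfold stopAt at h ⊢
  cases hf : u.inits.find? (· ∈ C) with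
  | none => rfl
  | some t => simp [hf] at h; simpa [h] using List.find?_some hf

lemma stopAt_append_singleton (C : Set (List X)) (u : List X) (x : X) :
    stopAt C (u ++ [x]) = if stopAt C u ∈ C then stopAt C u else u ++ [x] := by
  unfold stopAt
  cases hf : u.inits.find? (· ∈ C) with
  | none =>
    have hu : u ∉ C := by
      simpa using List.find?_eq_none.1 hf u ((List.mem_inits _ _).2 (List.prefix_refl u))
    by_cases hx : u ++ [x] ∈ C <;> simp [List.inits_append, hf, hu, hx]
  | some t =>
    have ht : t ∈ C := by simpa using List.find?_some hf
    simp [List.inits_append, hf, ht]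

lemma stopAt_eq_self_of_length_le {C : Set (List X)} {u : List X}
    (h : ∀ t ∈ C, u.length ≤ t.length) : stopAt C u = u := by
  by_cases hC : stopAt C u ∈ C
  · exact (stopAt_prefix C u).eq_of_length
      (le_antisymm (stopAt_prefix C u).length_le (h _ hC))
  · exact stopAt_eq_self_of_notMem hC

end Paths

section Supermartingales

variable {X : Type} [Fintype X] [Nonempty X]

lemma UpperExpTree.Q_le_of_le (Q : UpperExpTree X) (s : List X) {f : X → ℝ} {r : ℝ}
    (h : ∀ x, f x ≤ r) : Q.Q s f ≤ r :=
  (Q.le_sup s f).trans (ciSup_le h)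

lemma UpperExpTree.Q_add_const_le (Q : UpperExpTree X) (s : List X) (f : X → ℝ) (r : ℝ) :
    Q.Q s (fun x => f x + r) ≤ Q.Q s f + r :=
  (Q.subadd s f fun _ => r).trans (add_le_add_right (Q.Q_le_of_le s fun _ => le_rfl) _)

lemma IsSupermart.add_const {Q : UpperExpTree X} {M : List X → ℝ} (hM : IsSupermart Q M)
    (r : ℝ) : IsSupermart Q (fun u => M u + r) := fun u =>
  (Q.Q_add_const_le u _ r).trans (add_le_add_left (hM u) r)

lemma IsSupermart.comp_stopAt {Q : UpperExpTree X} {M : List X → ℝ} (hM : IsSupermart Q M)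
    (C : Set (List X)) : IsSupermart Q (fun u => M (stopAt C u)) := by
  intro u
  simp only [stopAt_append_singleton]
  split_ifs with hu
  · exact Q.Q_le_of_le u fun _ => le_rfl
  · simpa only [stopAt_eq_self_of_notMem hu] using hM u

lemma gtG_mono (Q : UpperExpTree X) (s : List X) {f g : Path X → ℝ}
    (h : ∀ ω ∈ cyl s, f ω ≤ g ω) : gtG Q f s ≤ gtG Q g s := by
  refine sInf_le_sInf ?_
  rintro _ ⟨M, hM, hMb, hMf, rfl⟩
  exact ⟨M, hM, hMb, fun ω hω => (EReal.coe_le_coe_iff.2 (h ω hω)).trans (hMf ω hω), rfl⟩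

theorem iInf_gtG_le_gtG (Q : UpperExpTree X) (s : List X) (g : ℕ → Path X → ℝ)
    (gLim : Path X → ℝ)
    (hg : ∀ n, ∃ m, ∀ ω ω' : Path X, prefixList ω m = prefixList ω' m → g n ω = g n ω')
    (hanti : Antitone g) (hlim : ∀ ω b, gLim ω < b → ∃ n, g n ω < b) :
    ⨅ n, gtG Q (g n) s ≤ gtG Q gLim s := by
  refine le_sInf ?_
  rintro _ ⟨M, hM, ⟨B, hB⟩, hMg, rfl⟩
  refine EReal.le_of_forall_lt_iff_le.1 fun r hr => ?_
  obtain ⟨ε, hε, rfl⟩ : ∃ ε > 0, r = M s + ε :=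
    ⟨r - M s, sub_pos.2 (EReal.coe_lt_coe_iff.1 hr), by ring⟩
  have hlocal : ∀ ω ∈ cyl s, ∃ t,
      (s.length ≤ t.length ∧ ∃ k, ∀ ω' ∈ cyl t, g k ω' ≤ M t + ε) ∧ ω ∈ cyl t := by
    intro ω hω
    obtain ⟨k, hk⟩ := hlim ω (gLim ω + ε / 2) (by linarith)
    obtain ⟨m, hm, hMm, hconst⟩ := exists_prefixList_const_lt_of_lt_liminf (hg k)
      ((EReal.coe_lt_coe_iff.2 (by linarith : gLim ω - ε / 2 < gLim ω)).trans_le (hMg ω hω))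
      s.length
    refine ⟨prefixList ω m, ⟨by rwa [prefixList_length], k, fun ω' hω' => ?_⟩,
      mem_cyl_prefixList ω m⟩
    rw [hconst ω' hω']
    linarith
  obtain ⟨C, hC, hcover⟩ := exists_finset_cover_cyl s _ hlocal
  choose! k hk using fun t ht => (hC t ht).2
  set K := C.sup k
  have hK : ∀ t ∈ C, ∀ ω ∈ cyl t, g K ω ≤ M t + ε := fun t ht ω hω =>
    (hanti (Finset.le_sup ht) ω).trans (hk t ht ω hω)
  set M' : List X → ℝ := fun u => M (stopAt C u) + ε
  have hM's : M' s = M s + ε := by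
    simp only [M', stopAt_eq_self_of_length_le fun t ht => (hC t ht).1]
  have hsuperhedge : ∀ ω ∈ cyl s,
      (g K ω : EReal) ≤ liminf (fun j => (M' (prefixList ω j) : EReal)) atTop := by
    intro ω hω
    obtain ⟨t, ht, hωt⟩ := Set.mem_iUnion₂.1 (hcover hω)
    refine le_liminf_of_le (by isBoundedDefault) (eventually_atTop.2 ⟨t.length, fun j hj => ?_⟩)
    have hstop : stopAt C (prefixList ω j) ∈ C :=
      stopAt_mem (C := C) ht (prefix_prefixList_of_mem_cyl hωt hj)
    exact EReal.coe_le_coe_iff.2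
      (hK _ hstop ω (mem_cyl_of_prefix (stopAt_prefix _ (prefixList ω j))))
  calc ⨅ n, gtG Q (g n) s ≤ gtG Q (g K) s := iInf_le _ K
    _ ≤ M' s := sInf_le ⟨M', (hM.comp_stopAt C).add_const ε,
        ⟨B + ε, fun u => by simp [M', hB]⟩, hsuperhedge, rfl⟩
    _ = _ := by rw [hM's]

end Supermartingales

noncomputable def truncReal (c d : ℝ) (x : EReal) : ℝ := ((x ⊔ c) ⊓ d).toReal

lemma coe_truncReal (c d : ℝ) (x : EReal) : (truncReal c d x : EReal) = (x ⊔ c) ⊓ d := by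
  refine EReal.coe_toReal (inf_le_right.trans_lt (EReal.coe_lt_top d)).ne ?_
  exact ((lt_inf_iff.2 ⟨EReal.bot_lt_coe c, EReal.bot_lt_coe d⟩).trans_le
    (inf_le_inf_right _ le_sup_right)).ne'

lemma truncReal_mono (c d : ℝ) : Monotone (truncReal c d) := fun x y h => by
  rw [← EReal.coe_le_coe_iff, coe_truncReal, coe_truncReal]
  exact inf_le_inf_right _ (sup_le_sup_right h _)

lemma truncReal_le_of_sup_le {c d : ℝ} {x : EReal} (h : x ⊔ c ≤ d) (d' : ℝ) :
    truncReal c d' x ≤ truncReal c d x := by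
  rw [← EReal.coe_le_coe_iff, coe_truncReal, coe_truncReal, inf_eq_left.2 h]
  exact inf_le_left

lemma exists_truncReal_lt {c d b : ℝ} {y : ℕ → EReal} (h : truncReal c d (⨅ n, y n) < b) :
    ∃ n, truncReal c d (y n) < b := by
  rw [← EReal.coe_lt_coe_iff, coe_truncReal, iInf_sup_eq, iInf_inf, iInf_lt_iff] at h
  obtain ⟨n, hn⟩ := h
  exact ⟨n, by rwa [← EReal.coe_lt_coe_iff, coe_truncReal]⟩

section UpperExpectation

variable {X : Type} [Fintype X] [Nonempty X]

lemma gtUE_mono (Q : UpperExpTree X) (s : List X) {f g : Path X → EReal}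
    (h : ∀ ω, f ω ≤ g ω) : gtUE Q f s ≤ gtUE Q g s :=
  iInf_mono fun c => iSup_mono fun d => gtG_mono Q s fun ω _ => truncReal_mono c d (h ω)

lemma gtUE_le_gtG_truncReal (Q : UpperExpTree X) (s : List X) {f : Path X → EReal} {c d : ℝ}
    (hcd : c ≤ d) (hf : ∀ ω, f ω ≤ d) :
    gtUE Q f s ≤ gtG Q (fun ω => truncReal c d (f ω)) s :=
  (iInf_le _ c).trans <| iSup_le fun d' => gtG_mono Q s fun ω _ =>
    truncReal_le_of_sup_le (sup_le (hf ω) (EReal.coe_le_coe_iff.2 hcd)) d'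

lemma gtG_truncReal_le_gtBB (Q : UpperExpTree X) (s : List X) (f : Path X → EReal) (c d : ℝ) :
    gtG Q (fun ω => truncReal c d (f ω)) s ≤ gtBB Q (fun ω => f ω ⊔ c) s :=
  le_iSup (fun d : ℝ => gtG Q (fun ω => truncReal c d (f ω)) s) d

end UpperExpectation

end UEPaper

namespace UEPaper

variable {X : Type} [Fintype X] [Nonempty X] [DecidableEq X]

theorem stmt7 (Q : UpperExpTree X) (s : List X)
    (fn : ℕ → Path X → EReal) (f : Path X → EReal)
    (hfin : ∀ n, IsFinGamble (fn n)) (hanti : Antitone fn)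
    (hlim : ∀ ω, f ω = ⨅ n, fn n ω) :
    Tendsto (fun n => gtUE Q (fn n) s) atTop (nhds (gtUE Q f s)) := by
  have hf_le : ∀ n ω, f ω ≤ fn n ω := fun n ω => hlim ω ▸ iInf_le _ n
  suffices h : ⨅ n, gtUE Q (fn n) s ≤ gtUE Q f s by
    rw [le_antisymm (le_iInf fun n => gtUE_mono Q s (hf_le n)) h]
    exact tendsto_atTop_iInf fun n m hnm => gtUE_mono Q s (hanti hnm)
  obtain ⟨B, hB⟩ := (hfin 0).2
  refine le_iInf fun c => ?_
  set d := max B c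
  have hfn_le : ∀ n ω, fn n ω ≤ d := fun n ω =>
    (hanti (Nat.zero_le n) ω).trans ((hB ω).2.trans (EReal.coe_le_coe_iff.2 (le_max_left B c)))
  have hmeas : ∀ n, ∃ m, ∀ ω ω' : Path X, prefixList ω m = prefixList ω' m →
      truncReal c d (fn n ω) = truncReal c d (fn n ω') := fun n => by
    obtain ⟨m, hm⟩ := (hfin n).1
    exact ⟨m, fun ω ω' h => congrArg (truncReal c d) (hm ω ω' h)⟩
  calc ⨅ n, gtUE Q (fn n) s
      ≤ ⨅ n, gtG Q (fun ω => truncReal c d (fn n ω)) s :=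
        iInf_mono fun n => gtUE_le_gtG_truncReal Q s (le_max_right B c) (hfn_le n)
    _ ≤ gtG Q (fun ω => truncReal c d (f ω)) s :=
        iInf_gtG_le_gtG Q s _ _ hmeas (fun _ _ hnm ω => truncReal_mono c d (hanti hnm ω))
          fun ω _ hb => exists_truncReal_lt (hlim ω ▸ hb)
    _ ≤ gtBB Q (fun ω => f ω ⊔ c) s := gtG_truncReal_le_gtBB Q s f c d

end UEPaper
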